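/- arXiv:1212.3973 — 2 statements merged into one kernel-verified Lean document; each statement's English description precedes it below -/
import Mathlib

section
/- For every n ≥ 0, the tail probabilities and hitting probabilities of the pattern A satisfy the renewal-type identity q_n · P(A) = Σ_{k=1}^{l} [A_(k) = A^(k)] · P(A^(l−k)) · p_{n+k}. -/
open MeasureTheory ENNReal

noncomputable section

/-- Probability of a single toss outcome: `true` (heads) has probability `p`,
`false` (tails) has probability `1 - p`. -/
def letterP (p : ℝ) (b : Bool) : ℝ := if b then p else 1 - p

/-- Probability of a finite string of tosses (`1` for the empty string). -/
def strP (p : ℝ) (A : List Bool) : ℝ := (A.map (letterP p)).prod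

/-- `μ` is the product measure on `{H,T}^ℕ` of i.i.d. coin tosses with heads
probability `p`: every cylinder set has the product probability. -/
def IsCoinMeasure (p : ℝ) (μ : Measure (ℕ → Bool)) : Prop :=
  ∀ (n : ℕ) (a : Fin n → Bool),
    μ {ξ | ∀ i : Fin n, ξ i = a i} = ENNReal.ofReal (∏ i, letterP p (a i))

/-- The pattern `A` (of length `l`) occurs ending exactly at toss `n`
(toss number `k ≥ 1` of `ξ` is `ξ (k - 1)`): `n ≥ l` and tosses
`n - l + 1, …, n` spell `A`. -/
def occursAt (A : List Bool) (ξ : ℕ → Bool) (n : ℕ) : Prop :=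
  A.length ≤ n ∧ (List.ofFn fun k : Fin A.length => ξ (n - A.length + k)) = A

/-- The first toss at which the pattern `A` has occurred (`⊤` if it never occurs). -/
def hitTime (A : List Bool) (ξ : ℕ → Bool) : ℕ∞ :=
  ⨅ (n : ℕ) (_ : occursAt A ξ n), (n : ℕ∞)


/-!
On `{τ_A > n}`, the tosses `n + 1, …, n + l` spell `A` with probability `P(A)`, independently
of the first `n` tosses. When they do, `A` is first completed at some toss `n + k` with
`1 ≤ k ≤ l`; that occurrence overlaps the one ending at `n + l` in `k` letters, which forces
`A_(k) = A^(k)`, and the tosses after `n + k` spell `A^(l-k)`, independently of the first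
`n + k` tosses. Conversely, `τ_A = n + k` followed by `A^(l-k)` reproduces `A` at tosses
`n + 1, …, n + l` when `A_(k) = A^(k)`. Summing the probabilities of this disjoint
decomposition over `k` gives the identity.
-/

lemma letterP_nonneg {p : ℝ} (hp0 : 0 ≤ p) (hp1 : p ≤ 1) (b : Bool) : 0 ≤ letterP p b := by
  cases b <;> simp [letterP] <;> linarith

lemma strP_nonneg {p : ℝ} (hp0 : 0 ≤ p) (hp1 : p ≤ 1) (w : List Bool) : 0 ≤ strP p w :=
  List.prod_nonneg fun _ hx => by
    obtain ⟨b, -, rfl⟩ := List.mem_map.mp hx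
    exact letterP_nonneg hp0 hp1 b

lemma strP_append (p : ℝ) (u v : List Bool) : strP p (u ++ v) = strP p u * strP p v := by
  simp [strP]

lemma strP_ofFn (p : ℝ) {N : ℕ} (b : Fin N → Bool) :
    strP p (List.ofFn b) = ∏ i, letterP p (b i) := by
  simp [strP, List.map_ofFn, List.prod_ofFn]

/-- `cylinderAt N w`: tosses `N + 1, …, N + |w|` spell `w`. -/
def cylinderAt (N : ℕ) (w : List Bool) : Set (ℕ → Bool) :=
  {ξ | ∀ j (hj : j < w.length), ξ (N + j) = w[j]}

section Cylinders

variable {ξ : ℕ → Bool} {N : ℕ}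

lemma mem_cylinderAt_append {u v : List Bool} :
    ξ ∈ cylinderAt N (u ++ v) ↔ ξ ∈ cylinderAt N u ∧ ξ ∈ cylinderAt (N + u.length) v := by
  simp only [cylinderAt, Set.mem_ofPred_eq, List.length_append]
  constructor
  · intro h
    refine ⟨fun j hj => ?_, fun j hj => ?_⟩
    · simpa [List.getElem_append_left hj] using h j (by omega)
    · simpa [add_assoc] using h (u.length + j) (by omega)
  · rintro ⟨hu, hv⟩ j hj
    rw [List.getElem_append]
    split_ifs with hju
    · exact hu j hju
    · simpa [show N + u.length + (j - u.length) = N + j by omega] using hv (j - u.length) (by omega)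

lemma mem_cylinderAt_iff_take_drop {w : List Bool} {i : ℕ} (hi : i ≤ w.length) :
    ξ ∈ cylinderAt N w ↔ ξ ∈ cylinderAt N (w.take i) ∧ ξ ∈ cylinderAt (N + i) (w.drop i) := by
  conv_lhs => rw [← List.take_append_drop i w]
  rw [mem_cylinderAt_append, List.length_take, min_eq_left hi]

lemma eq_of_mem_cylinderAt {u v : List Bool} (hu : ξ ∈ cylinderAt N u) (hv : ξ ∈ cylinderAt N v)
    (huv : u.length = v.length) : u = v :=
  List.ext_getElem huv fun j hju hjv => (hu j hju).symm.trans (hv j hjv)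

lemma occursAt_iff_mem_cylinderAt {A : List Bool} {m : ℕ} :
    occursAt A ξ m ↔ A.length ≤ m ∧ ξ ∈ cylinderAt (m - A.length) A := by
  refine and_congr_right fun _ => ⟨fun h j hj => ?_, fun h => List.ext_getElem (by simp) ?_⟩
  · have := List.getElem_of_eq h (i := j) (by simpa using hj)
    rw [List.getElem_ofFn] at this
    exact this
  · intro j _ hj
    simpa using h j hj

end Cylinders

section HitTime

variable {A : List Bool} {ξ η : ℕ → Bool}

lemma occursAt_congr {m N : ℕ} (hm : m ≤ N) (h : ∀ i < N, ξ i = η i) :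
    occursAt A ξ m ↔ occursAt A η m := by
  refine and_congr_right fun hA => ?_
  rw [show (fun k : Fin A.length => ξ (m - A.length + k)) = fun k : Fin A.length =>
    η (m - A.length + k) from funext fun k => h _ (by omega)]

lemma hitTime_le_of_occursAt {m : ℕ} (h : occursAt A ξ m) : hitTime A ξ ≤ m :=
  iInf₂_le m h

lemma le_hitTime_iff {m : ℕ} : (m : ℕ∞) ≤ hitTime A ξ ↔ ∀ k, occursAt A ξ k → m ≤ k := by
  simp [hitTime]

lemma lt_hitTime_iff {n : ℕ} : (n : ℕ∞) < hitTime A ξ ↔ ∀ k, occursAt A ξ k → n < k := by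
  rw [← ENat.add_one_le_iff (ENat.natCast_ne_top n), ← Nat.cast_add_one, le_hitTime_iff]
  rfl

lemma hitTime_eq_iff {m : ℕ} :
    hitTime A ξ = m ↔ occursAt A ξ m ∧ ∀ k, occursAt A ξ k → m ≤ k := by
  refine ⟨fun h => ⟨?_, le_hitTime_iff.mp h.ge⟩,
    fun h => le_antisymm (hitTime_le_of_occursAt h.1) (le_hitTime_iff.mpr h.2)⟩
  by_contra hm
  have : (m : ℕ∞) < hitTime A ξ := lt_hitTime_iff.mpr fun k hk =>
    lt_of_le_of_ne (le_hitTime_iff.mp h.ge k hk) (by rintro rfl; exact hm hk)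
  exact this.ne h.symm

lemma exists_hitTime_eq_of_occursAt {N : ℕ} (h : occursAt A ξ N) :
    ∃ m ≤ N, hitTime A ξ = m := by
  classical
  exact ⟨Nat.find ⟨N, h⟩, Nat.find_min' _ h,
    hitTime_eq_iff.mpr ⟨Nat.find_spec ⟨N, h⟩, fun k hk => Nat.find_min' _ hk⟩⟩

lemma dependsOn_lt_hitTime (A : List Bool) (n : ℕ) :
    DependsOn (· ∈ {ξ | (n : ℕ∞) < hitTime A ξ}) (Set.Iio n) := fun ξ η h => by
  simp only [Set.mem_ofPred_eq, lt_hitTime_iff]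
  refine propext <| forall_congr' fun k => ?_
  rcases lt_or_ge n k with hnk | hkn
  · simp [hnk]
  · exact imp_congr_left (occursAt_congr hkn h)

lemma dependsOn_hitTime_eq (A : List Bool) (m : ℕ) :
    DependsOn (· ∈ {ξ | hitTime A ξ = m}) (Set.Iio m) := fun ξ η h => by
  simp only [Set.mem_ofPred_eq, hitTime_eq_iff]
  refine propext <| and_congr (occursAt_congr le_rfl h) (forall_congr' fun k => ?_)
  rcases le_or_gt m k with hmk | hkm
  · simp [hmk]
  · exact imp_congr_left (occursAt_congr hkm.le h)

end HitTime

def firstTosses (N : ℕ) (ξ : ℕ → Bool) : Fin N → Bool := fun i => ξ i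

section CoinMeasure

variable {p : ℝ} {μ : Measure (ℕ → Bool)} {s : Set (ℕ → Bool)} {N : ℕ}

lemma measurable_firstTosses (N : ℕ) : Measurable (firstTosses N) :=
  measurable_pi_lambda _ fun i => measurable_pi_apply (i : ℕ)

lemma preimage_image_firstTosses (hs : DependsOn (· ∈ s) (Set.Iio N)) :
    firstTosses N ⁻¹' (firstTosses N '' s) = s := by
  refine (Set.subset_preimage_image _ _).antisymm' ?_
  rintro ξ ⟨η, hη, hηξ⟩
  exact (hs fun i hi => congrFun hηξ ⟨i, hi⟩).mp hη

lemma measurableSet_of_dependsOn (hs : DependsOn (· ∈ s) (Set.Iio N)) : MeasurableSet s :=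
  preimage_image_firstTosses hs ▸ measurable_firstTosses N (Set.toFinite _).measurableSet

lemma measure_preimage_firstTosses (hμ : IsCoinMeasure p μ) (S : Finset (Fin N → Bool)) :
    μ (firstTosses N ⁻¹' S) = ∑ b ∈ S, ENNReal.ofReal (strP p (List.ofFn b)) := by
  rw [← sum_measure_preimage_singleton S fun b _ =>
    measurable_firstTosses N (measurableSet_singleton b)]
  refine Finset.sum_congr rfl fun b _ => ?_
  rw [strP_ofFn, ← hμ N b]
  congr 1
  ext ξ
  simp [firstTosses, funext_iff]

lemma measure_inter_cylinderAt (hp0 : 0 ≤ p) (hp1 : p ≤ 1) (hμ : IsCoinMeasure p μ)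
    (hs : DependsOn (· ∈ s) (Set.Iio N)) (w : List Bool) :
    μ (s ∩ cylinderAt N w) = μ s * ENNReal.ofReal (strP p w) := by
  classical
  set T := (Set.toFinite (firstTosses N '' s)).toFinset
  have hT : s = firstTosses N ⁻¹' T := by simp [T, preimage_image_firstTosses hs]
  have hcyl : s ∩ cylinderAt N w = firstTosses (N + w.length) ⁻¹'
      ↑((T ×ˢ {w.get}).map (Fin.appendEquiv N w.length).toEmbedding) := by
    ext ξ
    conv_lhs => rw [hT]
    simp only [Set.mem_inter_iff, Set.mem_preimage, Finset.mem_coe, Finset.mem_map_equiv,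
      Finset.mem_product, Finset.mem_singleton, Fin.appendEquiv_symm_apply]
    refine and_congr Iff.rfl ⟨fun h => funext fun j => h j j.2, fun h j hj => congrFun h ⟨j, hj⟩⟩
  calc μ (s ∩ cylinderAt N w)
      = ∑ x ∈ T ×ˢ {w.get}, ENNReal.ofReal (strP p (List.ofFn (Fin.append x.1 x.2))) := by
        rw [hcyl, measure_preimage_firstTosses hμ, Finset.sum_map]
        rfl
    _ = ∑ b ∈ T, ENNReal.ofReal (strP p (List.ofFn b)) * ENNReal.ofReal (strP p w) := by
        simp [List.ofFn_fin_append, strP_append,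
          ENNReal.ofReal_mul (strP_nonneg hp0 hp1 _), List.ofFn_get]
    _ = μ s * ENNReal.ofReal (strP p w) := by
        conv_rhs => rw [hT, measure_preimage_firstTosses hμ, Finset.sum_mul]

end CoinMeasure

lemma dependsOn_cylinderAt (N : ℕ) (w : List Bool) :
    DependsOn (· ∈ cylinderAt N w) (Set.Iio (N + w.length)) := fun ξ η h =>
  propext <| forall_congr' fun j => forall_congr' fun hj => by
    rw [h (N + j) (Set.mem_Iio.mpr (by omega))]

section Renewal

variable {A : List Bool} {ξ : ℕ → Bool} {n k : ℕ}

lemma exists_overlap_of_lt_hitTime (hn : (n : ℕ∞) < hitTime A ξ) (hξ : ξ ∈ cylinderAt n A) :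
    ∃ k ∈ Finset.Icc 1 A.length, A.take k = A.drop (A.length - k) ∧
      hitTime A ξ = (n + k : ℕ) ∧ ξ ∈ cylinderAt (n + k) (A.drop k) := by
  have hocc : occursAt A ξ (n + A.length) :=
    occursAt_iff_mem_cylinderAt.mpr ⟨by omega, by simpa using hξ⟩
  obtain ⟨m, hm, hτ⟩ := exists_hitTime_eq_of_occursAt hocc
  have hnm : n < m := by rw [hτ] at hn; exact_mod_cast hn
  obtain ⟨k, rfl⟩ := Nat.exists_eq_add_of_le hnm.le
  obtain ⟨hl, hcyl⟩ := occursAt_iff_mem_cylinderAt.mp (hitTime_eq_iff.mp hτ).1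
  rw [mem_cylinderAt_iff_take_drop (by omega : k ≤ A.length)] at hξ
  rw [mem_cylinderAt_iff_take_drop (Nat.sub_le A.length k),
    show n + k - A.length + (A.length - k) = n by omega] at hcyl
  exact ⟨k, Finset.mem_Icc.mpr ⟨by omega, by omega⟩,
    eq_of_mem_cylinderAt hξ.1 hcyl.2 (by simp; omega), hτ, hξ.2⟩

lemma mem_cylinderAt_of_hitTime_eq (hk : k ≤ A.length)
    (hoverlap : A.take k = A.drop (A.length - k)) (hτ : hitTime A ξ = (n + k : ℕ))
    (hξ : ξ ∈ cylinderAt (n + k) (A.drop k)) : ξ ∈ cylinderAt n A := by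
  obtain ⟨hl, hcyl⟩ := occursAt_iff_mem_cylinderAt.mp (hitTime_eq_iff.mp hτ).1
  rw [mem_cylinderAt_iff_take_drop (Nat.sub_le A.length k),
    show n + k - A.length + (A.length - k) = n by omega, ← hoverlap] at hcyl
  exact (mem_cylinderAt_iff_take_drop hk).mpr ⟨hcyl.2, hξ⟩

variable (A n) in
lemma lt_hitTime_inter_cylinderAt_eq_biUnion :
    {ξ | (n : ℕ∞) < hitTime A ξ} ∩ cylinderAt n A =
      ⋃ k ∈ (Finset.Icc 1 A.length).filter (fun k => A.take k = A.drop (A.length - k)),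
        {ξ | hitTime A ξ = (n + k : ℕ)} ∩ cylinderAt (n + k) (A.drop k) := by
  ext ξ
  simp only [Set.mem_inter_iff, Set.mem_iUnion, Finset.mem_filter, exists_prop,
    Set.mem_ofPred_eq]
  refine ⟨fun h => ?_, ?_⟩
  · obtain ⟨k, hk, hoverlap, hτ, hξ⟩ := exists_overlap_of_lt_hitTime h.1 h.2
    exact ⟨k, ⟨hk, hoverlap⟩, hτ, hξ⟩
  · rintro ⟨k, ⟨hk, hoverlap⟩, hτ, hξ⟩
    obtain ⟨hk1, hkl⟩ := Finset.mem_Icc.mp hk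
    refine ⟨?_, mem_cylinderAt_of_hitTime_eq hkl hoverlap hτ hξ⟩
    rw [hτ, Nat.cast_lt]
    omega

variable (A n) in
lemma measure_lt_hitTime_inter_cylinderAt (μ : Measure (ℕ → Bool)) :
    μ ({ξ | (n : ℕ∞) < hitTime A ξ} ∩ cylinderAt n A) =
      ∑ k ∈ (Finset.Icc 1 A.length).filter (fun k => A.take k = A.drop (A.length - k)),
        μ ({ξ | hitTime A ξ = (n + k : ℕ)} ∩ cylinderAt (n + k) (A.drop k)) := by
  rw [lt_hitTime_inter_cylinderAt_eq_biUnion, measure_biUnion_finset]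
  · intro k _ k' _ hkk'
    refine Set.disjoint_left.mpr fun ξ hk hk' => hkk' ?_
    have : n + k = n + k' := by exact_mod_cast hk.1.symm.trans hk'.1
    omega
  · exact fun k _ => (measurableSet_of_dependsOn (dependsOn_hitTime_eq A (n + k))).inter
      (measurableSet_of_dependsOn (dependsOn_cylinderAt (n + k) (A.drop k)))

end Renewal

theorem renewal_identity_general (p : ℝ) (hp0 : 0 < p) (hp1 : p < 1)
    (μ : Measure (ℕ → Bool)) [IsProbabilityMeasure μ] (hμ : IsCoinMeasure p μ)
    (A : List Bool) (n : ℕ) :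
    (μ {ξ | (n : ℕ∞) < hitTime A ξ}).toReal * strP p A =
      ∑ k ∈ Finset.Icc 1 A.length,
        (if A.take k = A.drop (A.length - k) then (1 : ℝ) else 0) *
          strP p (A.drop k) *
          (μ {ξ | hitTime A ξ = ((n + k : ℕ) : ℕ∞)}).toReal := by
  have hindep {s : Set (ℕ → Bool)} {N : ℕ} (hs : DependsOn (· ∈ s) (Set.Iio N)) (w : List Bool) :=
    measure_inter_cylinderAt hp0.le hp1.le hμ hs w
  have hstrP (w : List Bool) := ENNReal.toReal_ofReal (strP_nonneg hp0.le hp1.le w)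
  have key := congrArg ENNReal.toReal (measure_lt_hitTime_inter_cylinderAt A n μ)
  rw [hindep (dependsOn_lt_hitTime A n), ENNReal.toReal_mul, hstrP,
    ENNReal.toReal_sum fun k _ => measure_ne_top μ _] at key
  rw [key, Finset.sum_filter]
  refine Finset.sum_congr rfl fun k _ => ?_
  rw [hindep (dependsOn_hitTime_eq A (n + k)), ENNReal.toReal_mul, hstrP]
  split_ifs <;> ring

/-- For every `n ≥ 0`, the tail probabilities `q_n = μ(τ_A > n)`
and hitting probabilities `p_n = μ(τ_A = n)` of the pattern `A` satisfy
`q_n ⬝ P(A) = Σ_{k=1}^{l} [A_(k) = A^(k)] ⬝ P(A^(l−k)) ⬝ p_{n+k}`. -/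
theorem renewal_identity (p : ℝ) (hp0 : 0 < p) (hp1 : p < 1)
    (μ : Measure (ℕ → Bool)) [IsProbabilityMeasure μ] (hμ : IsCoinMeasure p μ)
    (A : List Bool) (hA : 1 ≤ A.length) (n : ℕ) :
    (μ {ξ | (n : ℕ∞) < hitTime A ξ}).toReal * strP p A =
      ∑ k ∈ Finset.Icc 1 A.length,
        (if A.take k = A.drop (A.length - k) then (1 : ℝ) else 0) *
          strP p (A.drop k) *
          (μ {ξ | hitTime A ξ = ((n + k : ℕ) : ℕ∞)}).toReal :=
  renewal_identity_general p hp0 hp1 μ hμ A n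
end
end

section
/- For every s ∈ [−1,1], the probability generating function g_{τ_A}(s) = Σ_{n≥0} p_n s^n satisfies the identity g_{τ_A}(s) · ( P(A) s^l + (1 − s) Σ_{k=1}^{l} [A_(k) = A^(k)] P(A^(l−k)) s^{l−k} ) = P(A) s^l. In particular, wherever the second factor is nonzero, g_{τ_A}(s) = P(A) s^l / ( P(A) s^l + (1 − s) Σ_{k=1}^{l} [A_(k) = A^(k)] P(A^(l−k)) s^{l−k} ). -/
open MeasureTheory ENNReal

noncomputable section

/-- The correlation polynomial
`w_A^B(s) = Σ_{k=1}^{min(|A|,|B|)} [A_(k) = B^(k)] P(A^(|A|-k)) s^(|A|-k)`,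
where `A_(k)` is the prefix of length `k` of `A` and `B^(k)` is the suffix of
length `k` of `B`. -/
def corrW (p : ℝ) (A B : List Bool) (s : ℝ) : ℝ :=
  ∑ k ∈ Finset.Icc 1 (min A.length B.length),
    (if A.take k = B.drop (B.length - k) then (1 : ℝ) else 0) *
      strP p (A.drop k) * s ^ (A.length - k)

/-!
Split the event that `A` ends at time `n` according to the time `m ≤ n` of its first occurrence.
The event `τ_A = m` only involves the first `m` tosses, so it is independent of the later ones,
and given it, `A` ends again at time `n` with probability `c_{n-m}`, which for `n - m < l`
depends on whether `A` overlaps itself with shift `n - m`. This renewal equation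
`∑_{m ≤ n} p_m c_{n-m} = P(A) [n ≥ l]` says `g(s) C(s) = P(A) s^l / (1 - s)` with
`C(s) = ∑ c_j s^j = w(s) + P(A) s^l / (1 - s)`. Multiplying by `1 - s` turns `C` into the
polynomial `P(A) s^l + (1 - s) w(s)`, and the Cauchy product of the absolutely convergent series
`g` with a polynomial is valid on all of `[-1, 1]`.
-/

namespace CoinPattern

section Words

variable {p : ℝ}

lemma letterP_nonneg (hp0 : 0 ≤ p) (hp1 : p ≤ 1) (b : Bool) : 0 ≤ letterP p b := by
  cases b <;> simp [letterP] <;> linarith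

lemma strP_nonneg (hp0 : 0 ≤ p) (hp1 : p ≤ 1) (w : List Bool) : 0 ≤ strP p w :=
  List.prod_nonneg fun _ hx => by
    obtain ⟨b, -, rfl⟩ := List.mem_map.1 hx
    exact letterP_nonneg hp0 hp1 b

lemma strP_append (u v : List Bool) : strP p (u ++ v) = strP p u * strP p v := by
  simp [strP]

lemma strP_ofFn {n : ℕ} (a : Fin n → Bool) : strP p (List.ofFn a) = ∏ i, letterP p (a i) := by
  simp [strP, List.map_ofFn, List.prod_ofFn]

lemma sum_strP_ofFn (g : ℕ) : ∑ a : Fin g → Bool, strP p (List.ofFn a) = 1 := by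
  simp only [strP_ofFn]
  rw [← Fintype.prod_sum]
  simp [letterP]

end Words

section Cylinders

open Set Function

def window (ξ : ℕ → Bool) (k n : ℕ) : List Bool := List.ofFn fun i : Fin n => ξ (k + i)

def cyl (k : ℕ) (u : List Bool) : Set (ℕ → Bool) := {ξ | window ξ k u.length = u}

@[simp]
lemma length_window (ξ : ℕ → Bool) (k n : ℕ) : (window ξ k n).length = n := List.length_ofFn

lemma window_add (ξ : ℕ → Bool) (k a b : ℕ) :
    window ξ k (a + b) = window ξ k a ++ window ξ (k + a) b := by
  simp only [window, List.ofFn_add, Fin.val_castLE, Fin.val_natAdd, add_assoc]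

lemma window_congr {ξ η : ℕ → Bool} {k n : ℕ} (h : ∀ i < k + n, ξ i = η i) :
    window ξ k n = window η k n := by
  simp only [window, List.ofFn_inj]
  exact funext fun i => h _ (by omega)

lemma cyl_nil (k : ℕ) : cyl k [] = univ := by
  ext; simp [cyl, window]

lemma cyl_append (k : ℕ) (u v : List Bool) :
    cyl k (u ++ v) = cyl k u ∩ cyl (k + u.length) v := by
  ext ξ
  simp only [cyl, mem_ofPred_eq, mem_inter_iff, List.length_append, window_add]
  refine ⟨fun h => List.append_inj h (by simp [window]), fun h => by rw [h.1, h.2]⟩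

lemma eq_of_mem_cyl {ξ : ℕ → Bool} {k : ℕ} {u v : List Bool} (hu : ξ ∈ cyl k u)
    (hv : ξ ∈ cyl k v) (h : u.length = v.length) : u = v := by
  rw [← hu, ← hv, h]

lemma measurableSet_cyl (k : ℕ) (u : List Bool) : MeasurableSet (cyl k u) := by
  have : cyl k u = ⋂ i : Fin u.length, (fun ξ : ℕ → Bool => ξ (k + i)) ⁻¹' {u[i]} := by
    ext ξ
    simp [cyl, window, List.ext_get_iff, Fin.forall_iff]
  rw [this]
  exact MeasurableSet.iInter fun i => measurable_pi_apply _ (measurableSet_singleton _)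

lemma iUnion_cyl_ofFn (k g : ℕ) : ⋃ a : Fin g → Bool, cyl k (List.ofFn a) = univ :=
  eq_univ_of_forall fun ξ => mem_iUnion.2 ⟨fun i => ξ (k + i), by simp [cyl, window]⟩

lemma pairwise_disjoint_cyl_ofFn (k g : ℕ) :
    Pairwise (Disjoint on fun a : Fin g → Bool => cyl k (List.ofFn a)) := fun a b hab =>
  Set.disjoint_left.2 fun _ ha hb => hab (List.ofFn_injective (eq_of_mem_cyl ha hb (by simp)))

end Cylinders

section Independence

open Set Function

variable {p : ℝ} {μ : Measure (ℕ → Bool)}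

lemma measure_cyl_zero (hμ : IsCoinMeasure p μ) (w : List Bool) :
    μ (cyl 0 w) = ENNReal.ofReal (strP p w) := by
  have hset : {ξ : ℕ → Bool | ∀ i : Fin w.length, ξ i = w.get i} = cyl 0 w := by
    ext ξ
    simp [cyl, window, List.ext_get_iff, Fin.forall_iff]
  rw [← hset, hμ, ← strP_ofFn, List.ofFn_get]

lemma measure_cyl_inter_cyl (hp0 : 0 ≤ p) (hp1 : p ≤ 1) (hμ : IsCoinMeasure p μ)
    (w u : List Bool) (g : ℕ) :
    μ (cyl 0 w ∩ cyl (w.length + g) u) = ENNReal.ofReal (strP p w * strP p u) := by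
  set C := cyl 0 w ∩ cyl (w.length + g) u
  have hpiece : ∀ a : Fin g → Bool,
      C ∩ cyl w.length (List.ofFn a) = cyl 0 (w ++ List.ofFn a ++ u) := by
    intro a
    simp only [C, cyl_append, zero_add, List.length_append, List.length_ofFn, inter_right_comm]
  calc μ C = μ (⋃ a : Fin g → Bool, C ∩ cyl w.length (List.ofFn a)) := by
        rw [← inter_iUnion, iUnion_cyl_ofFn, inter_univ]
    _ = ∑ a : Fin g → Bool, ENNReal.ofReal (strP p w * strP p u * strP p (List.ofFn a)) := by
        rw [measure_iUnion, tsum_fintype]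
        · refine Finset.sum_congr rfl fun a _ => ?_
          rw [hpiece, measure_cyl_zero hμ, strP_append, strP_append, mul_right_comm]
        · exact (pairwise_disjoint_cyl_ofFn _ g).mono fun _ _ =>
            Disjoint.mono inter_subset_right inter_subset_right
        · exact fun a => (hpiece a).symm ▸ measurableSet_cyl _ _
    _ = ENNReal.ofReal (strP p w * strP p u) := by
        rw [← ENNReal.ofReal_sum_of_nonneg, ← Finset.mul_sum, sum_strP_ofFn, mul_one]
        exact fun a _ => mul_nonneg (mul_nonneg (strP_nonneg hp0 hp1 w) (strP_nonneg hp0 hp1 u))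
          (strP_nonneg hp0 hp1 _)

lemma measure_cyl (hp0 : 0 ≤ p) (hp1 : p ≤ 1) (hμ : IsCoinMeasure p μ) (k : ℕ)
    (u : List Bool) : μ (cyl k u) = ENNReal.ofReal (strP p u) := by
  simpa [cyl_nil, strP] using measure_cyl_inter_cyl hp0 hp1 hμ [] u k

lemma measure_eq_tsum_inter_cyl {T : Set (ℕ → Bool)} (hT : MeasurableSet T) (m : ℕ) :
    μ T = ∑' a : Fin m → Bool, μ (T ∩ cyl 0 (List.ofFn a)) := by
  conv_lhs => rw [← inter_univ T, ← iUnion_cyl_ofFn 0 m, inter_iUnion]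
  exact measure_iUnion ((pairwise_disjoint_cyl_ofFn 0 m).mono fun _ _ =>
    Disjoint.mono inter_subset_right inter_subset_right) fun _ => hT.inter (measurableSet_cyl _ _)

variable {S : Set (ℕ → Bool)} {m : ℕ}

lemma cyl_window_subset (hS : DependsOn (· ∈ S) (Iio m)) {ξ : ℕ → Bool} (hξ : ξ ∈ S) :
    cyl 0 (window ξ 0 m) ⊆ S := by
  intro η hη
  have hηξ : window η 0 m = window ξ 0 m := by
    simpa only [cyl, mem_ofPred_eq, length_window] using hη
  simp only [window, List.ofFn_inj, funext_iff, zero_add] at hηξ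
  rw [show (η ∈ S) = (ξ ∈ S) from hS fun i hi => hηξ ⟨i, hi⟩]
  exact hξ

lemma cyl_subset_or_disjoint (hS : DependsOn (· ∈ S) (Iio m)) (a : Fin m → Bool) :
    cyl 0 (List.ofFn a) ⊆ S ∨ Disjoint (cyl 0 (List.ofFn a)) S := by
  refine or_iff_not_imp_right.2 fun h => ?_
  obtain ⟨ξ, ha, hξ⟩ := not_disjoint_iff.1 h
  have : window ξ 0 m = List.ofFn a := by simpa [cyl] using ha
  exact this ▸ cyl_window_subset hS hξ

lemma measurableSet_of_dependsOn (hS : DependsOn (· ∈ S) (Iio m)) : MeasurableSet S := by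
  have : S = ⋃ a ∈ {a : Fin m → Bool | cyl 0 (List.ofFn a) ⊆ S}, cyl 0 (List.ofFn a) := by
    refine Subset.antisymm (fun ξ hξ => mem_iUnion₂.2 ⟨fun i => ξ i, ?_, ?_⟩)
      (iUnion₂_subset fun _ h => h)
    · simpa [window] using cyl_window_subset hS hξ
    · simp [cyl, window]
  rw [this]
  exact MeasurableSet.biUnion (to_countable _) fun a _ => measurableSet_cyl _ _

lemma measure_inter_cyl_of_dependsOn (hp0 : 0 ≤ p) (hp1 : p ≤ 1) (hμ : IsCoinMeasure p μ)
    (hS : DependsOn (· ∈ S) (Iio m)) (g : ℕ) (u : List Bool) :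
    μ (S ∩ cyl (m + g) u) = μ S * ENNReal.ofReal (strP p u) := by
  have hSm := measurableSet_of_dependsOn hS
  have hpiece : ∀ a : Fin m → Bool, μ (S ∩ cyl (m + g) u ∩ cyl 0 (List.ofFn a))
      = μ (S ∩ cyl 0 (List.ofFn a)) * ENNReal.ofReal (strP p u) := by
    intro a
    rw [inter_right_comm]
    rcases cyl_subset_or_disjoint hS a with h | h
    · have := measure_cyl_inter_cyl hp0 hp1 hμ (List.ofFn a) u g
      rw [List.length_ofFn] at this
      rw [inter_eq_right.2 h, this, measure_cyl_zero hμ,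
        ENNReal.ofReal_mul (strP_nonneg hp0 hp1 _)]
    · rw [inter_comm S, h.inter_eq, empty_inter, measure_empty, zero_mul]
  rw [measure_eq_tsum_inter_cyl (hSm.inter (measurableSet_cyl _ _)) m,
    measure_eq_tsum_inter_cyl hSm m, ← ENNReal.tsum_mul_right]
  exact tsum_congr hpiece

end Independence

section HittingTime

open Set Function

variable {A : List Bool} {ξ η : ℕ → Bool} {n m : ℕ}

lemma occursAt_iff_mem_cyl : occursAt A ξ n ↔ A.length ≤ n ∧ ξ ∈ cyl (n - A.length) A :=
  Iff.rfl

lemma occursAt_congr (h : ∀ i < n, ξ i = η i) : occursAt A ξ n ↔ occursAt A η n := by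
  simp only [occursAt_iff_mem_cyl, cyl, mem_ofPred_eq]
  exact and_congr_right fun hl => by rw [window_congr fun i hi => h i (by omega)]

lemma hitTime_eq_sInf (h : {k | occursAt A ξ k}.Nonempty) :
    hitTime A ξ = (sInf {k | occursAt A ξ k} : ℕ) :=
  (ENat.natCast_sInf h).symm

lemma hitTime_eq_coe_iff :
    hitTime A ξ = m ↔ occursAt A ξ m ∧ ∀ k < m, ¬ occursAt A ξ k := by
  rcases {k | occursAt A ξ k}.eq_empty_or_nonempty with h | h
  · have hno : ∀ k, ¬ occursAt A ξ k := fun k => eq_empty_iff_forall_notMem.1 h k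
    simp [hitTime, hno]
  · rw [hitTime_eq_sInf h, Nat.cast_inj]
    constructor
    · rintro rfl
      exact ⟨Nat.sInf_mem h, fun k hk => Nat.notMem_of_lt_sInf hk⟩
    · exact fun ⟨hm, hmin⟩ =>
        IsLeast.csInf_eq ⟨hm, fun k hk => not_lt.1 fun hkm => hmin k hkm hk⟩

lemma exists_hitTime_eq_of_occursAt (hξ : occursAt A ξ n) : ∃ m ≤ n, hitTime A ξ = m :=
  ⟨_, Nat.sInf_le hξ, hitTime_eq_sInf ⟨n, hξ⟩⟩

lemma setOf_hitTime_eq_eq_empty (hm : m < A.length) : {ξ | hitTime A ξ = m} = ∅ :=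
  eq_empty_of_forall_notMem fun _ h => (hitTime_eq_coe_iff.1 h).1.1.not_gt hm

lemma disjoint_hitTime_eq {m m' : ℕ} (h : m ≠ m') :
    Disjoint {ξ | hitTime A ξ = m} {ξ | hitTime A ξ = m'} :=
  disjoint_left.2 fun _ hm hm' => h (Nat.cast_injective (hm.symm.trans hm'))

lemma dependsOn_hitTime_eq (A : List Bool) (m : ℕ) :
    DependsOn (· ∈ {ξ | hitTime A ξ = m}) (Iio m) := by
  intro ξ η h
  simp only [mem_ofPred_eq, hitTime_eq_coe_iff, eq_iff_iff]
  exact and_congr (occursAt_congr h) (forall₂_congr fun k hk =>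
    not_congr (occursAt_congr fun i hi => h i (hi.trans hk)))

end HittingTime

section Renewal

open Set Function

/-- The probability that `A` ends at time `t + j` given that it ends at time `t`. For `j ≥ |A|`
the truncated subtractions make the condition trivial and the weight is `strP p A`. -/
def overlapWeight (p : ℝ) (A : List Bool) (j : ℕ) : ℝ :=
  if A.take (A.length - j) = A.drop j then strP p (A.drop (A.length - j)) else 0

def hitProb (μ : Measure (ℕ → Bool)) (A : List Bool) (n : ℕ) : ℝ :=
  (μ {ξ | hitTime A ξ = n}).toReal

variable {p : ℝ} {A : List Bool} {μ : Measure (ℕ → Bool)}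

lemma overlapWeight_nonneg (hp0 : 0 ≤ p) (hp1 : p ≤ 1) (j : ℕ) :
    0 ≤ overlapWeight p A j := by
  unfold overlapWeight
  split_ifs
  exacts [strP_nonneg hp0 hp1 _, le_rfl]

lemma overlapWeight_of_length_le {j : ℕ} (h : A.length ≤ j) :
    overlapWeight p A j = strP p A := by
  simp [overlapWeight, Nat.sub_eq_zero_of_le h, List.drop_of_length_le h]

lemma mem_cyl_add_iff {ξ : ℕ → Bool} {k : ℕ} (hξ : ξ ∈ cyl k A) (j : ℕ) :
    ξ ∈ cyl (k + j) A ↔ A.take (A.length - j) = A.drop j ∧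
      ξ ∈ cyl (k + A.length + (j - A.length)) (A.drop (A.length - j)) := by
  set l := A.length
  rcases le_or_gt l j with hj | hj
  · simp [Nat.sub_eq_zero_of_le hj, List.drop_of_length_le hj,
      show k + l + (j - l) = k + j by omega]
  have hsplit : cyl (k + j) A = cyl (k + j) (A.take (l - j)) ∩ cyl (k + l) (A.drop (l - j)) := by
    conv_lhs => rw [← List.take_append_drop (l - j) A]
    rw [cyl_append, List.length_take, show k + j + min (l - j) l = k + l by omega]
  have htail : ξ ∈ cyl (k + j) (A.drop j) := by
    rw [← List.take_append_drop j A, cyl_append, List.length_take, min_eq_left hj.le] at hξ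
    exact hξ.2
  rw [hsplit, mem_inter_iff, show j - l = 0 by omega, add_zero]
  exact and_congr_left fun _ =>
    ⟨fun h => eq_of_mem_cyl h htail (by simp [l]), fun h => h ▸ htail⟩

lemma measure_hitTime_eq_inter_cyl (hp0 : 0 ≤ p) (hp1 : p ≤ 1) (hμ : IsCoinMeasure p μ)
    {n m : ℕ} (hmn : m ≤ n) :
    μ ({ξ | hitTime A ξ = m} ∩ cyl (n - A.length) A) =
      μ {ξ | hitTime A ξ = m} * ENNReal.ofReal (overlapWeight p A (n - m)) := by
  rcases lt_or_ge m A.length with hm | hm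
  · simp [setOf_hitTime_eq_eq_empty hm]
  have hset : {ξ | hitTime A ξ = m} ∩ cyl (n - A.length) A = {ξ | hitTime A ξ = m} ∩
      {ξ | A.take (A.length - (n - m)) = A.drop (n - m) ∧
        ξ ∈ cyl (m + (n - m - A.length)) (A.drop (A.length - (n - m)))} := by
    ext ξ
    refine and_congr_right fun h => ?_
    have hξ : ξ ∈ cyl (m - A.length) A := (hitTime_eq_coe_iff.1 h).1.2
    rw [show n - A.length = m - A.length + (n - m) by omega, mem_cyl_add_iff hξ,
      show m - A.length + A.length = m by omega]
    rfl
  rw [hset, overlapWeight]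
  split_ifs with hc
  · simp only [hc, true_and, ofPred_mem_eq]
    exact measure_inter_cyl_of_dependsOn hp0 hp1 hμ (dependsOn_hitTime_eq A m) _ _
  · simp [hc]

lemma hitProb_nonneg {n : ℕ} : 0 ≤ hitProb μ A n := ENNReal.toReal_nonneg

lemma hitProb_eq_zero_of_lt_length {m : ℕ} (hm : m < A.length) : hitProb μ A m = 0 := by
  simp [hitProb, setOf_hitTime_eq_eq_empty hm]

lemma sum_hitProb_mul_overlapWeight (hp0 : 0 ≤ p) (hp1 : p ≤ 1) (hμ : IsCoinMeasure p μ)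
    [IsFiniteMeasure μ] (n : ℕ) :
    ∑ m ∈ Finset.range (n + 1), hitProb μ A m * overlapWeight p A (n - m) =
      if A.length ≤ n then strP p A else 0 := by
  rcases lt_or_ge n A.length with hn | hn
  · rw [if_neg hn.not_ge]
    exact Finset.sum_eq_zero fun m hm => by
      rw [hitProb_eq_zero_of_lt_length (by simp at hm; omega), zero_mul]
  rw [if_pos hn]
  have hcover : cyl (n - A.length) A =
      ⋃ m ∈ Finset.range (n + 1), {ξ | hitTime A ξ = m} ∩ cyl (n - A.length) A := by
    refine Subset.antisymm (fun ξ hξ => ?_) (iUnion₂_subset fun _ _ => inter_subset_right)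
    obtain ⟨m, hmn, hm⟩ := exists_hitTime_eq_of_occursAt (occursAt_iff_mem_cyl.2 ⟨hn, hξ⟩)
    exact mem_iUnion₂.2 ⟨m, Finset.mem_range.2 (by omega), hm, hξ⟩
  have h := measure_cyl hp0 hp1 hμ (n - A.length) A
  rw [hcover, measure_biUnion_finset
    (fun m _ m' _ hne => (disjoint_hitTime_eq hne).mono inter_subset_left inter_subset_left)
    (fun m _ => (measurableSet_of_dependsOn (dependsOn_hitTime_eq A m)).inter
      (measurableSet_cyl _ _)),
    Finset.sum_congr rfl fun m hm => measure_hitTime_eq_inter_cyl hp0 hp1 hμ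
      (Nat.lt_succ_iff.1 (Finset.mem_range.1 hm))] at h
  apply_fun ENNReal.toReal at h
  rw [ENNReal.toReal_sum fun m _ => ENNReal.mul_ne_top (measure_ne_top _ _) ENNReal.ofReal_ne_top,
    ENNReal.toReal_ofReal (strP_nonneg hp0 hp1 A)] at h
  simpa [hitProb, ENNReal.toReal_mul, ENNReal.toReal_ofReal (overlapWeight_nonneg hp0 hp1 _)]
    using h

lemma summable_hitProb [IsFiniteMeasure μ] : Summable (hitProb μ A) := by
  refine ENNReal.summable_toReal ?_
  rw [← measure_iUnion (fun m m' h => disjoint_hitTime_eq h)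
    fun m => measurableSet_of_dependsOn (dependsOn_hitTime_eq A m)]
  exact measure_ne_top _ _

end Renewal

section GeneratingFunction

open Finset

variable {p : ℝ} {A : List Bool} {μ : Measure (ℕ → Bool)}

lemma corrW_self_eq_sum (s : ℝ) :
    corrW p A A s = ∑ j ∈ range A.length, overlapWeight p A j * s ^ j := by
  rw [corrW, min_self]
  refine sum_nbij' (fun k => A.length - k) (fun j => A.length - j) ?_ ?_ ?_ ?_ ?_ <;>
    intro k hk <;> simp only [mem_range, mem_Icc] at hk ⊢
  any_goals omega
  rw [overlapWeight, Nat.sub_sub_self hk.2]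
  split_ifs <;> simp

def denomCoeff (p : ℝ) (A : List Bool) (j : ℕ) : ℝ :=
  overlapWeight p A j - if j = 0 then 0 else overlapWeight p A (j - 1)

lemma denomCoeff_of_length_lt {j : ℕ} (h : A.length < j) : denomCoeff p A j = 0 := by
  rw [denomCoeff, if_neg (by omega), overlapWeight_of_length_le h.le,
    overlapWeight_of_length_le (by omega), sub_self]

lemma sum_denomCoeff_mul_pow (s : ℝ) :
    ∑ j ∈ range (A.length + 1), denomCoeff p A j * s ^ j =
      strP p A * s ^ A.length + (1 - s) * corrW p A A s := by
  have hshift :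
      ∑ j ∈ range (A.length + 1), (if j = 0 then 0 else overlapWeight p A (j - 1)) * s ^ j =
        s * ∑ j ∈ range A.length, overlapWeight p A j * s ^ j := by
    rw [sum_range_succ', mul_sum]
    simp [pow_succ, mul_comm, mul_left_comm]
  simp only [denomCoeff, sub_mul, sum_sub_distrib, hshift, corrW_self_eq_sum]
  rw [sum_range_succ, overlapWeight_of_length_le le_rfl]
  ring

lemma sum_hitProb_mul_denomCoeff (hp0 : 0 ≤ p) (hp1 : p ≤ 1) (hμ : IsCoinMeasure p μ)
    [IsFiniteMeasure μ] (n : ℕ) :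
    ∑ m ∈ range (n + 1), hitProb μ A m * denomCoeff p A (n - m) =
      if n = A.length then strP p A else 0 := by
  have hrenewal := sum_hitProb_mul_overlapWeight (A := A) hp0 hp1 hμ
  cases n with
  | zero => simpa [denomCoeff, eq_comm] using hrenewal 0
  | succ k =>
    have hprev : ∑ m ∈ range (k + 1 + 1), hitProb μ A m *
        (if k + 1 - m = 0 then 0 else overlapWeight p A (k + 1 - m - 1)) =
          ∑ m ∈ range (k + 1), hitProb μ A m * overlapWeight p A (k - m) := by
      rw [sum_range_succ, Nat.sub_self, if_pos rfl, mul_zero, add_zero]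
      refine sum_congr rfl fun m hm => ?_
      rw [mem_range] at hm
      rw [if_neg (by omega), show k + 1 - m - 1 = k - m by omega]
    simp only [denomCoeff, mul_sub, sum_sub_distrib, hprev, hrenewal]
    split_ifs <;> first | omega | ring

lemma tsum_hitProb_mul_pow_mul_denom (hp0 : 0 ≤ p) (hp1 : p ≤ 1) (hμ : IsCoinMeasure p μ)
    [IsFiniteMeasure μ] {s : ℝ} (hs : |s| ≤ 1) :
    (∑' n, hitProb μ A n * s ^ n) * (strP p A * s ^ A.length + (1 - s) * corrW p A A s) =
      strP p A * s ^ A.length := by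
  have hf : Summable fun n => ‖hitProb μ A n * s ^ n‖ := by
    refine (summable_hitProb (μ := μ) (A := A)).of_nonneg_of_le (fun _ => norm_nonneg _)
      fun n => ?_
    rw [norm_mul, norm_pow, Real.norm_of_nonneg hitProb_nonneg]
    exact mul_le_of_le_one_right hitProb_nonneg (pow_le_one₀ (norm_nonneg s) hs)
  have hd : Summable fun j => ‖denomCoeff p A j * s ^ j‖ :=
    summable_of_ne_finset_zero (s := range (A.length + 1)) fun j hj => by
      rw [denomCoeff_of_length_lt (by simpa using hj), zero_mul, norm_zero]
  have hdenom : ∑' j, denomCoeff p A j * s ^ j =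
      strP p A * s ^ A.length + (1 - s) * corrW p A A s := by
    rw [← sum_denomCoeff_mul_pow, tsum_eq_sum (s := range (A.length + 1)) fun j hj => by
      rw [denomCoeff_of_length_lt (by simpa using hj), zero_mul]]
  rw [← hdenom, tsum_mul_tsum_eq_tsum_sum_range_of_summable_norm hf hd]
  calc ∑' n, ∑ m ∈ range (n + 1),
        hitProb μ A m * s ^ m * (denomCoeff p A (n - m) * s ^ (n - m))
      = ∑' n, if n = A.length then strP p A * s ^ n else 0 := tsum_congr fun n => by
        rw [← ite_zero_mul, ← sum_hitProb_mul_denomCoeff hp0 hp1 hμ, sum_mul]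
        refine sum_congr rfl fun m hm => ?_
        rw [← pow_mul_pow_sub s (Nat.lt_succ_iff.1 (mem_range.1 hm))]
        ring
    _ = strP p A * s ^ A.length := tsum_ite_eq _ _

end GeneratingFunction

end CoinPattern

theorem pgf_identity_general (p : ℝ) (hp0 : 0 < p) (hp1 : p < 1)
    (μ : Measure (ℕ → Bool)) [IsProbabilityMeasure μ] (hμ : IsCoinMeasure p μ)
    (A : List Bool) (s : ℝ) (hs : s ∈ Set.Icc (-1 : ℝ) 1) :
    (∑' n : ℕ, (μ {ξ | hitTime A ξ = (n : ℕ∞)}).toReal * s ^ n) *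
        (strP p A * s ^ A.length + (1 - s) * corrW p A A s) =
      strP p A * s ^ A.length ∧
    (strP p A * s ^ A.length + (1 - s) * corrW p A A s ≠ 0 →
      (∑' n : ℕ, (μ {ξ | hitTime A ξ = (n : ℕ∞)}).toReal * s ^ n) =
        strP p A * s ^ A.length /
          (strP p A * s ^ A.length + (1 - s) * corrW p A A s)) := by
  have key := CoinPattern.tsum_hitProb_mul_pow_mul_denom (A := A) hp0.le hp1.le hμ (abs_le.2 hs)
  exact ⟨key, fun hne => (eq_div_iff hne).2 key⟩

/-- For every `s ∈ [−1,1]`, the probability generating function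
`g_{τ_A}(s) = Σ_{n≥0} p_n s^n` satisfies
`g_{τ_A}(s) ⬝ (P(A) s^l + (1−s) Σ_{k=1}^{l} [A_(k)=A^(k)] P(A^(l−k)) s^{l−k}) = P(A) s^l`,
and wherever the second factor is nonzero, `g_{τ_A}(s)` equals the corresponding quotient.
(Here `Σ_{k=1}^{l} [A_(k)=A^(k)] P(A^(l−k)) s^{l−k} = w_A^A(s) = corrW p A A s`.) -/
theorem pgf_identity (p : ℝ) (hp0 : 0 < p) (hp1 : p < 1)
    (μ : Measure (ℕ → Bool)) [IsProbabilityMeasure μ] (hμ : IsCoinMeasure p μ)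
    (A : List Bool) (hA : 1 ≤ A.length) (s : ℝ) (hs : s ∈ Set.Icc (-1 : ℝ) 1) :
    (∑' n : ℕ, (μ {ξ | hitTime A ξ = (n : ℕ∞)}).toReal * s ^ n) *
        (strP p A * s ^ A.length + (1 - s) * corrW p A A s) =
      strP p A * s ^ A.length ∧
    (strP p A * s ^ A.length + (1 - s) * corrW p A A s ≠ 0 →
      (∑' n : ℕ, (μ {ξ | hitTime A ξ = (n : ℕ∞)}).toReal * s ^ n) =
        strP p A * s ^ A.length /
          (strP p A * s ^ A.length + (1 - s) * corrW p A A s)) :=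
  pgf_identity_general p hp0 hp1 μ hμ A s hs
end
end
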